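/- Assume α₂ > α₃. Then q₂ > q₁, where q₂ := k₂·(B−C)/(√(α₂·π)·erf(z₀·√(α₁/α₂))) and q₁ := k₁·(C−D)/√(π·α₁). -/

import Mathlib

noncomputable section

/-- The error function `erf x = (2/√π) ∫₀ˣ exp(−s²) ds`. -/
def erf (x : ℝ) : ℝ := (2 / Real.sqrt Real.pi) * ∫ s in (0:ℝ)..x, Real.exp (-(s^2))

/-- The complementary error function. -/
def erfc (x : ℝ) : ℝ := 1 - erf x

/-- Physical data of the three-phase Stefan problem: positive thermal conductivities,
specific heats, mass density, latent heats, and temperatures `B > C > D`. -/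
structure Params where
  k₁ : ℝ
  k₂ : ℝ
  k₃ : ℝ
  c₁ : ℝ
  c₂ : ℝ
  c₃ : ℝ
  ρ : ℝ
  ℓ₁ : ℝ
  ℓ₂ : ℝ
  B : ℝ
  C : ℝ
  D : ℝ
  hk₁ : 0 < k₁
  hk₂ : 0 < k₂
  hk₃ : 0 < k₃
  hc₁ : 0 < c₁
  hc₂ : 0 < c₂
  hc₃ : 0 < c₃
  hρ : 0 < ρ
  hℓ₁ : 0 < ℓ₁
  hℓ₂ : 0 < ℓ₂
  hBC : C < B
  hCD : D < C

namespace Params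

/-- Thermal diffusivity of phase 1. -/
def α₁ (p : Params) : ℝ := p.k₁ / (p.ρ * p.c₁)

/-- Thermal diffusivity of phase 2. -/
def α₂ (p : Params) : ℝ := p.k₂ / (p.ρ * p.c₂)

/-- Thermal diffusivity of phase 3. -/
def α₃ (p : Params) : ℝ := p.k₃ / (p.ρ * p.c₃)

/-- Stefan number `Ste₁ = c₁(C−D)/ℓ₁`. -/
def Ste₁ (p : Params) : ℝ := p.c₁ * (p.C - p.D) / p.ℓ₁

/-- Stefan number `Ste₂ = c₂(B−C)/ℓ₂`. -/
def Ste₂ (p : Params) : ℝ := p.c₂ * (p.B - p.C) / p.ℓ₂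

/-- `φ(z) = z + (Ste₁/√π) exp(−z²)/erfc(z)`. -/
def φ (p : Params) (z : ℝ) : ℝ :=
  z + (p.Ste₁ / Real.sqrt Real.pi) * Real.exp (-(z^2)) / erfc z

/-- `H(z) = erf(z√(α₁/α₂)) − (Ste₂/√π)(ℓ₂/ℓ₁)√(k₂c₁/(k₁c₂)) exp(−z²α₁/α₂)/φ(z)`. -/
def H (p : Params) (z : ℝ) : ℝ :=
  erf (z * Real.sqrt (p.α₁ / p.α₂)) -
    (p.Ste₂ / Real.sqrt Real.pi) * (p.ℓ₂ / p.ℓ₁) *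
      Real.sqrt (p.k₂ * p.c₁ / (p.k₁ * p.c₂)) *
      (Real.exp (-(z^2) * (p.α₁ / p.α₂)) / p.φ z)

/-- `Q(z) = (ℓ₁/ℓ₂) φ(z) exp(z² α₁/α₂)`. -/
def Q (p : Params) (z : ℝ) : ℝ :=
  (p.ℓ₁ / p.ℓ₂) * p.φ z * Real.exp (z^2 * (p.α₁ / p.α₂))

/-- The function `T` arising from the Robin (convective) boundary condition with
heat-transfer coefficient `h₀` and bulk temperature `Ainf`. -/
def T (p : Params) (h₀ Ainf : ℝ) (z : ℝ) : ℝ :=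
  (p.Ste₂ / (Real.sqrt Real.pi * p.c₂)) * ((Ainf - p.B) / (p.B - p.C)) *
    Real.sqrt (p.k₃ * p.c₁ * p.c₃ / p.k₁) *
    (Real.exp (-(z^2) * p.α₁ * (1 / p.α₃ - 1 / p.α₂)) /
      (p.k₃ / (h₀ * Real.sqrt (Real.pi * p.α₃)) + erf (z * Real.sqrt (p.α₁ / p.α₃)))) -
  z * Real.exp (z^2 * (p.α₁ / p.α₂))

/-- The function `V` arising from the Dirichlet boundary condition with temperature `A`. -/
def V (p : Params) (A : ℝ) (z : ℝ) : ℝ :=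
  ((A - p.B) / p.ℓ₂) * Real.sqrt (p.c₁ * p.c₃ * p.k₃ / (Real.pi * p.k₁)) *
    (Real.exp (-(z^2) * (p.α₁ / p.α₃ - p.α₁ / p.α₂)) / erf (z * Real.sqrt (p.α₁ / p.α₃))) -
  z * Real.exp (z^2 * (p.α₁ / p.α₂))

/-- The function `P` arising from the Neumann boundary condition with flux coefficient `q₀`. -/
def P (p : Params) (q₀ : ℝ) (z : ℝ) : ℝ :=
  Real.exp (z^2 * (p.α₁ / p.α₂)) *
    (-z + (q₀ / p.ℓ₂) * Real.sqrt (p.c₁ / (p.ρ * p.k₁)) * Real.exp (-(z^2) * (p.α₁ / p.α₃)))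

/-- Critical heat-transfer coefficient `h₂`. -/
def h2 (p : Params) (Ainf z₀ : ℝ) : ℝ :=
  ((p.B - p.C) / (Ainf - p.B)) *
    Real.sqrt (p.k₂ * p.k₃ * p.c₂ / (Real.pi * p.c₃ * p.α₃)) *
    (1 / erf (z₀ * Real.sqrt (p.α₁ / p.α₂)))

/-- Critical heat-flux coefficient `q₂`. -/
def q2 (p : Params) (z₀ : ℝ) : ℝ :=
  p.k₂ * (p.B - p.C) / (Real.sqrt (p.α₂ * Real.pi) * erf (z₀ * Real.sqrt (p.α₁ / p.α₂)))

end Params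

/-! Solving `H z₀ = 0` for `erf (z₀ √(α₁/α₂))` gives `q₂ = ρ ℓ₁ √α₁ · φ(z₀) exp(z₀² α₁/α₂)`,
while `q₁ = ρ ℓ₁ √α₁ · Ste₁/√π`. The Gaussian tail bound `erfc z ≤ exp (-z²)` for `z ≥ 0` gives
`φ(z) ≥ z + Ste₁/√π`, and the exponential factor is at least `1`, so `q₂ > q₁` once `z₀ > 0`. -/

open MeasureTheory Set Real

lemma integrable_exp_neg_sq : Integrable fun s : ℝ => exp (-(s ^ 2)) := by
  simpa using integrable_exp_neg_mul_sq (b := 1) one_pos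

lemma erfc_eq_integral_Ioi (z : ℝ) :
    erfc z = 2 / √π * ∫ s in Ioi z, exp (-(s ^ 2)) := by
  have hπ : √π ≠ 0 := (sqrt_pos.mpr pi_pos).ne'
  have hsplit := intervalIntegral.integral_Ioi_sub_Ioi'
    integrable_exp_neg_sq.integrableOn integrable_exp_neg_sq.integrableOn (a := 0) (b := z)
  have hhalf : ∫ s in Ioi (0 : ℝ), exp (-(s ^ 2)) = √π / 2 := by
    simpa using integral_gaussian_Ioi 1
  rw [erfc, erf, ← hsplit, hhalf]
  field_simp
  ring

lemma erfc_pos (z : ℝ) : 0 < erfc z := by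
  rw [erfc_eq_integral_Ioi]
  have : NeZero (volume.restrict (Ioi z)) := ⟨by simp⟩
  have := integral_exp_pos (μ := volume.restrict (Ioi z)) integrable_exp_neg_sq.integrableOn
  positivity

/-- On `s ≥ z ≥ 0` one has `s² ≥ z² + (s - z)²`, so the tail is at most `exp (-z²)` times a
half Gaussian integral. -/
lemma erfc_le_exp_neg_sq {z : ℝ} (hz : 0 ≤ z) : erfc z ≤ exp (-(z ^ 2)) := by
  have hshift : ∫ s in Ioi z, exp (-(s ^ 2)) = ∫ t in Ioi (0 : ℝ), exp (-((t + z) ^ 2)) := by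
    rw [← (measurePreserving_add_right volume z).setIntegral_preimage_emb
      (measurableEmbedding_addRight z) (fun s => exp (-(s ^ 2))) (Ioi z)]
    simp [preimage_add_const_Ioi]
  have htail : ∫ t in Ioi (0 : ℝ), exp (-((t + z) ^ 2)) ≤ exp (-(z ^ 2)) * (√π / 2) :=
    calc ∫ t in Ioi (0 : ℝ), exp (-((t + z) ^ 2))
        ≤ ∫ t in Ioi (0 : ℝ), exp (-(z ^ 2)) * exp (-(t ^ 2)) := by
          refine setIntegral_mono_on (integrable_exp_neg_sq.comp_add_right z).integrableOn
            (integrable_exp_neg_sq.const_mul _).integrableOn measurableSet_Ioi fun t ht => ?_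
          rw [← exp_add, exp_le_exp]
          nlinarith [mem_Ioi.mp ht]
      _ = exp (-(z ^ 2)) * (√π / 2) := by
          rw [integral_const_mul]
          simpa using integral_gaussian_Ioi 1
  have hπ : 0 < √π := sqrt_pos.mpr pi_pos
  rw [erfc_eq_integral_Ioi, hshift]
  calc 2 / √π * ∫ t in Ioi (0 : ℝ), exp (-((t + z) ^ 2))
      ≤ 2 / √π * (exp (-(z ^ 2)) * (√π / 2)) := by gcongr
    _ = exp (-(z ^ 2)) := by field_simp

namespace Params

variable (p : Params)

lemma α₁_pos : 0 < p.α₁ := div_pos p.hk₁ (mul_pos p.hρ p.hc₁)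

lemma α₂_pos : 0 < p.α₂ := div_pos p.hk₂ (mul_pos p.hρ p.hc₂)

lemma Ste₁_pos : 0 < p.Ste₁ := div_pos (mul_pos p.hc₁ (sub_pos.mpr p.hCD)) p.hℓ₁

lemma k₁_eq : p.k₁ = p.ρ * p.c₁ * p.α₁ := by
  rw [α₁]
  field_simp [p.hρ.ne', p.hc₁.ne']

lemma k₂_eq : p.k₂ = p.ρ * p.c₂ * p.α₂ := by
  rw [α₂]
  field_simp [p.hρ.ne', p.hc₂.ne']

lemma k₂_mul_c₁_div_k₁_mul_c₂ : p.k₂ * p.c₁ / (p.k₁ * p.c₂) = p.α₂ / p.α₁ := by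
  rw [α₁, α₂]
  field_simp [p.hρ.ne', p.hc₁.ne', p.hc₂.ne', p.hk₁.ne']

lemma add_Ste₁_div_sqrt_pi_le_φ {z : ℝ} (hz : 0 ≤ z) : z + p.Ste₁ / √π ≤ p.φ z := by
  have hratio : 1 ≤ exp (-(z ^ 2)) / erfc z :=
    (one_le_div (erfc_pos z)).mpr (erfc_le_exp_neg_sq hz)
  have hSte : 0 ≤ p.Ste₁ / √π := by have := p.Ste₁_pos; positivity
  rw [φ, mul_div_assoc]
  gcongr
  exact le_mul_of_one_le_right hSte hratio

lemma k₁_mul_sub_div_sqrt_pi_mul_α₁ :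
    p.k₁ * (p.C - p.D) / √(π * p.α₁) = p.ρ * p.ℓ₁ * √p.α₁ * (p.Ste₁ / √π) := by
  have hα₁ := sqrt_pos.mpr p.α₁_pos
  rw [sqrt_mul pi_pos.le, p.k₁_eq, Ste₁]
  field_simp [p.hℓ₁.ne']
  rw [sq_sqrt p.α₁_pos.le]
  ring

lemma q2_eq_of_H_eq_zero {z : ℝ} (hH : p.H z = 0) (hφ : p.φ z ≠ 0) :
    p.q2 z = p.ρ * p.ℓ₁ * √p.α₁ * (p.φ z * exp (z ^ 2 * (p.α₁ / p.α₂))) := by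
  have herf : erf (z * √(p.α₁ / p.α₂)) = p.Ste₂ / √π * (p.ℓ₂ / p.ℓ₁) *
      √(p.k₂ * p.c₁ / (p.k₁ * p.c₂)) * ((exp (z ^ 2 * (p.α₁ / p.α₂)))⁻¹ / p.φ z) := by
    rwa [H, sub_eq_zero, neg_mul, exp_neg] at hH
  have hα₁ := sqrt_pos.mpr p.α₁_pos
  have hα₂ := sqrt_pos.mpr p.α₂_pos
  rw [q2, herf, k₂_mul_c₁_div_k₁_mul_c₂, sqrt_mul p.α₂_pos.le, sqrt_div p.α₂_pos.le, p.k₂_eq, Ste₂]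
  field_simp [p.hc₂.ne', p.hℓ₁.ne', p.hℓ₂.ne', (sub_pos.mpr p.hBC).ne']
  rw [sq_sqrt p.α₂_pos.le]

end Params

theorem q2_gt_q1_general (p : Params) (z₀ : ℝ)
    (hz₀ : 0 < z₀ ∧ p.H z₀ = 0) :
    p.k₁ * (p.C - p.D) / Real.sqrt (Real.pi * p.α₁) < p.q2 z₀ := by
  obtain ⟨hz, hH⟩ := hz₀
  have hφ := p.add_Ste₁_div_sqrt_pi_le_φ hz.le
  have hSte : 0 < p.Ste₁ / √π := div_pos p.Ste₁_pos (sqrt_pos.mpr pi_pos)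
  have hexp : 1 ≤ exp (z₀ ^ 2 * (p.α₁ / p.α₂)) :=
    one_le_exp (mul_nonneg (sq_nonneg z₀) (div_pos p.α₁_pos p.α₂_pos).le)
  have hscale : 0 < p.ρ * p.ℓ₁ * √p.α₁ := mul_pos (mul_pos p.hρ p.hℓ₁) (sqrt_pos.mpr p.α₁_pos)
  rw [p.k₁_mul_sub_div_sqrt_pi_mul_α₁, p.q2_eq_of_H_eq_zero hH (by linarith)]
  calc p.ρ * p.ℓ₁ * √p.α₁ * (p.Ste₁ / √π)
      < p.ρ * p.ℓ₁ * √p.α₁ * p.φ z₀ := mul_lt_mul_of_pos_left (by linarith) hscale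
    _ ≤ p.ρ * p.ℓ₁ * √p.α₁ * (p.φ z₀ * exp (z₀ ^ 2 * (p.α₁ / p.α₂))) :=
        mul_le_mul_of_nonneg_left (le_mul_of_one_le_right (by linarith) hexp) hscale.le

/-- if `α₂ > α₃`, then `q₂ > q₁` where `q₁ = k₁(C−D)/√(πα₁)`. -/
theorem q2_gt_q1 (p : Params) (z₀ : ℝ)
    (hα : p.α₃ < p.α₂)
    (hz₀ : 0 < z₀ ∧ p.H z₀ = 0) :
    p.k₁ * (p.C - p.D) / Real.sqrt (Real.pi * p.α₁) < p.q2 z₀ :=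
  q2_gt_q1_general p z₀ hz₀
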